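/- Let P₁,P₂,P₃ be finite pairwise-disjoint sets and Q₁,Q₂,Q₃ be finite pairwise-disjoint sets of propositional variables, let φ be a (P₁∪P₂, Q₁∪Q₂)-formula, let M=(W,≺,⊩) and M'=(W',≺',⊩') be finite transitive irreflexive Kripke models, let w ∈ W, w' ∈ W', and let m ∈ ω. If Th_{3n(φ)+3}^{(P₂,Q₂)}(w) ⊆ Th_{3n(φ)+3}^{(P₂,Q₂)}(w'), then there exist a finite transitive irreflexive Kripke model M* = (W*,≺*,⊩*) and w* ∈ W* such that for every subformula ψ of φ: (1) if ψ is a (P₁∪P₂, Q₁∪Q₂)-formula and w ⊩ ψ, then w* ⊩* ψ; (2) if ψ is a (Q₁∪Q₂, P₁∪P₂)-formula and w ⊮ ψ, then w* ⊮* ψ; and moreover (3) Th_m^{(P₂∪P₃,Q₂∪Q₃)}(w*) ⊆ Th_m^{(P₂∪P₃,Q₂∪Q₃)}(w'). -/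

import Mathlib

/-- Modal formulas: propositional variables, ⊥, →, □. -/
inductive Formula : Type
  | var : ℕ → Formula
  | bot : Formula
  | imp : Formula → Formula → Formula
  | box : Formula → Formula
  deriving DecidableEq

namespace Formula

def neg (φ : Formula) : Formula := φ.imp bot

def top : Formula := neg bot

def and (φ ψ : Formula) : Formula := (φ.imp ψ.neg).neg

def iff (φ ψ : Formula) : Formula := (φ.imp ψ).and (ψ.imp φ)

def dia (φ : Formula) : Formula := φ.neg.box.neg

/-- Variables occurring positively (`true`) / negatively (`false`). -/
def vsgn : Formula → Bool → Finset ℕ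
  | var p, true => {p}
  | var _, false => ∅
  | bot, _ => ∅
  | imp φ ψ, b => vsgn φ (!b) ∪ vsgn ψ b
  | box φ, b => vsgn φ b

def vpos (φ : Formula) : Finset ℕ := vsgn φ true
def vneg (φ : Formula) : Finset ℕ := vsgn φ false
def vars (φ : Formula) : Finset ℕ := vpos φ ∪ vneg φ

/-- Modal depth. -/
def depth : Formula → ℕ
  | var _ => 0
  | bot => 0
  | imp φ ψ => max (depth φ) (depth ψ)
  | box φ => depth φ + 1

/-- Uniform substitution. -/
def subst (σ : ℕ → Formula) : Formula → Formula
  | var p => σ p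
  | bot => bot
  | imp φ ψ => (subst σ φ).imp (subst σ ψ)
  | box φ => (subst σ φ).box

/-- The set of subformulas. -/
def subfmls : Formula → Finset Formula
  | var p => {var p}
  | bot => {bot}
  | imp φ ψ => insert (imp φ ψ) (subfmls φ ∪ subfmls ψ)
  | box φ => insert (box φ) (subfmls φ)

/-- n(φ) = |{ψ : □ψ ∈ Sub(φ)}|. -/
def boxCount (φ : Formula) : ℕ :=
  ((subfmls φ).filter fun ψ => box ψ ∈ subfmls φ).card

/-- The translation ⋆ : p⋆ = p, ⊥⋆ = ⊥, (φ→ψ)⋆ = φ⋆→ψ⋆, (□φ)⋆ = φ⋆ ∧ □φ⋆. -/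
def star : Formula → Formula
  | var p => var p
  | bot => bot
  | imp φ ψ => (star φ).imp (star ψ)
  | box φ => (star φ).and (star φ).box

end Formula

/-- Propositional tautology: true under every valuation treating variables and
boxed formulas as atoms. -/
def Tautology (φ : Formula) : Prop :=
  ∀ v : Formula → Bool, v .bot = false →
    (∀ ψ θ : Formula, v (ψ.imp θ) = (!v ψ || v θ)) → v φ = true

/-- A normal modal logic: contains all tautologies and □(p→q)→(□p→□q), and is
closed under modus ponens, necessitation and uniform substitution. -/
structure IsNormal (L : Set Formula) : Prop where
  taut : ∀ φ, Tautology φ → φ ∈ L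
  axK : ((Formula.var 0).imp (Formula.var 1)).box.imp
      ((Formula.var 0).box.imp (Formula.var 1).box) ∈ L
  mp : ∀ φ ψ : Formula, φ.imp ψ ∈ L → φ ∈ L → ψ ∈ L
  nec : ∀ φ : Formula, φ ∈ L → φ.box ∈ L
  subst_mem : ∀ φ ∈ L, ∀ σ : ℕ → Formula, Formula.subst σ φ ∈ L

/-- The least normal modal logic including `X`. -/
def NormalExt (X : Set Formula) : Set Formula :=
  ⋂₀ {L : Set Formula | IsNormal L ∧ X ⊆ L}

/-- The least normal modal logic K. -/
def TheoryK : Set Formula := NormalExt ∅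

def axT : Formula := (Formula.var 0).box.imp (Formula.var 0)
def ax4 : Formula := (Formula.var 0).box.imp (Formula.var 0).box.box
def axB : Formula := (Formula.var 0).imp (Formula.var 0).dia.box
def axD : Formula := Formula.bot.box.neg
def axGL : Formula := ((Formula.var 0).box.imp (Formula.var 0)).box.imp (Formula.var 0).box
def axGrz : Formula :=
  (((Formula.var 0).imp (Formula.var 0).box).box.imp (Formula.var 0)).box.imp (Formula.var 0)

def TheoryKD : Set Formula := NormalExt {axD}
def TheoryKT : Set Formula := NormalExt {axT}
def TheoryKB : Set Formula := NormalExt {axB}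
def TheoryKDB : Set Formula := NormalExt {axD, axB}
def TheoryKTB : Set Formula := NormalExt {axT, axB}
def TheoryK4 : Set Formula := NormalExt {ax4}
def TheoryS4 : Set Formula := NormalExt {axT, ax4}
def TheoryGL : Set Formula := NormalExt {axGL}
def TheoryGrz : Set Formula := NormalExt {axGrz}

/-- L⋆ := {φ : L ⊢ φ⋆}. -/
def starLogic (L : Set Formula) : Set Formula := {φ | Formula.star φ ∈ L}

/-- θ is a uniform Lyndon interpolant of (φ, P, Q) in L. -/
def IsULInterpolant (L : Set Formula) (φ : Formula) (P Q : Finset ℕ) (θ : Formula) : Prop :=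
  θ.vpos ⊆ φ.vpos \ P ∧ θ.vneg ⊆ φ.vneg \ Q ∧ φ.imp θ ∈ L ∧
    ∀ ψ : Formula, ψ.vpos ∩ P = ∅ → ψ.vneg ∩ Q = ∅ → φ.imp ψ ∈ L → θ.imp ψ ∈ L

/-- The uniform Lyndon interpolation property. -/
def ULIP (L : Set Formula) : Prop :=
  ∀ (φ : Formula) (P Q : Finset ℕ), ∃ θ : Formula, IsULInterpolant L φ P Q θ

/-- The uniform interpolation property. -/
def UIP (L : Set Formula) : Prop :=
  ∀ (φ : Formula) (P : Finset ℕ), ∃ θ : Formula,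
    θ.vars ⊆ φ.vars \ P ∧ φ.imp θ ∈ L ∧
      ∀ ψ : Formula, ψ.vars ∩ P = ∅ → φ.imp ψ ∈ L → θ.imp ψ ∈ L

/-- The Lyndon interpolation property. -/
def LIP (L : Set Formula) : Prop :=
  ∀ φ ψ : Formula, φ.imp ψ ∈ L → ∃ θ : Formula,
    θ.vpos ⊆ φ.vpos ∩ ψ.vpos ∧ θ.vneg ⊆ φ.vneg ∩ ψ.vneg ∧
      φ.imp θ ∈ L ∧ θ.imp ψ ∈ L

/-- A Kripke model. -/
structure KripkeModel where
  W : Type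
  nonempty : Nonempty W
  rel : W → W → Prop
  val : W → ℕ → Prop

/-- Satisfaction in a Kripke model. -/
def KripkeModel.Sat (M : KripkeModel) : Formula → M.W → Prop
  | .var p, w => M.val w p
  | .bot, _ => False
  | .imp φ ψ, w => M.Sat φ w → M.Sat ψ w
  | .box φ, w => ∀ x, M.rel w x → M.Sat φ x

/-- A (P,Q)-formula: v⁺(φ) ⊆ P and v⁻(φ) ⊆ Q. -/
def PQFormula (P Q : Finset ℕ) (φ : Formula) : Prop := φ.vpos ⊆ P ∧ φ.vneg ⊆ Q

/-- `F n P Q` is a finite list of (P,Q)-formulas of modal depth ≤ n such that every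
(P,Q)-formula of modal depth ≤ n is K-provably equivalent to some member. -/
def IsFamily (F : ℕ → Finset ℕ → Finset ℕ → List Formula) : Prop :=
  ∀ (n : ℕ) (P Q : Finset ℕ),
    (∀ φ ∈ F n P Q, PQFormula P Q φ ∧ φ.depth ≤ n) ∧
    ∀ ψ : Formula, PQFormula P Q ψ → ψ.depth ≤ n →
      ∃ φ ∈ F n P Q, Formula.iff φ ψ ∈ TheoryK

/-- Th_n^{(P,Q)}(w) = {φ ∈ F_n^{(P,Q)} : w ⊩ φ}. -/
def Th (F : ℕ → Finset ℕ → Finset ℕ → List Formula) (M : KripkeModel)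
    (n : ℕ) (P Q : Finset ℕ) (w : M.W) : Set Formula :=
  {φ | φ ∈ F n P Q ∧ M.Sat φ w}

def conjList : List Formula → Formula
  | [] => Formula.top
  | φ :: l => φ.and (conjList l)

open Classical in
/-- C_n^{(P,Q)}(w) = ⋀ Th_n^{(P,Q)}(w). -/
noncomputable def Cfml (F : ℕ → Finset ℕ → Finset ℕ → List Formula) (M : KripkeModel)
    (n : ℕ) (P Q : Finset ℕ) (w : M.W) : Formula :=
  conjList ((F n P Q).filter fun φ => decide (M.Sat φ w))

/-- Layered (P,Q)-bisimulation between M and M'. -/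
def LayeredBisim (P Q : Finset ℕ) (M M' : KripkeModel)
    (Z : M.W → ℕ → M'.W → Prop) : Prop :=
  (∀ w n w', Z w n w' →
    (∀ p ∈ P, M.val w p → M'.val w' p) ∧ (∀ q ∈ Q, ¬M.val w q → ¬M'.val w' q)) ∧
  (∀ w n w', Z w (n + 1) w' → ∀ x, M.rel w x → ∃ x', M'.rel w' x' ∧ Z x n x') ∧
  (∀ w n w', Z w (n + 1) w' → ∀ x', M'.rel w' x' → ∃ x, M.rel w x ∧ Z x n x')

/-- Downward closedness of a layered bisimulation. -/
def DownClosed (M M' : KripkeModel) (Z : M.W → ℕ → M'.W → Prop) : Prop :=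
  ∀ w n w', Z w n w' → ∀ m ≤ n, Z w m w'

/-- A class of Kripke models has ULIP. -/
def ClassULIP (F : ℕ → Finset ℕ → Finset ℕ → List Formula) (Cl : Set KripkeModel) : Prop :=
  ∀ P1 P2 P3 Q1 Q2 Q3 : Finset ℕ,
    Disjoint P1 P2 → Disjoint P1 P3 → Disjoint P2 P3 →
    Disjoint Q1 Q2 → Disjoint Q1 Q3 → Disjoint Q2 Q3 →
    ∀ M : KripkeModel, M ∈ Cl → ∀ M' : KripkeModel, M' ∈ Cl →
    ∀ w : M.W, ∀ w' : M'.W, ∀ m n : ℕ,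
      Th F M n P2 Q2 w ⊆ Th F M' n P2 Q2 w' →
      ∃ Mst : KripkeModel, Mst ∈ Cl ∧ ∃ wst : Mst.W,
        Th F M n (P1 ∪ P2) (Q1 ∪ Q2) w ⊆ Th F Mst n (P1 ∪ P2) (Q1 ∪ Q2) wst ∧
        Th F Mst m (P2 ∪ P3) (Q2 ∪ Q3) wst ⊆ Th F M' m (P2 ∪ P3) (Q2 ∪ Q3) w'

/-!
Let `B` be the set of arguments of the boxes of `φ`, and call `σ ∈ B` active at `u` when
`u ⊩ □σ`. The model `M*` consists of the pairs `(z, v) ∈ W' × W` such that `z` satisfies the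
characteristic `(P₂, Q₂)`-formula of `v` of depth `3 (|B| - |active v|) + 2` together with `□ξ`,
where `ξ` recursively describes, still in the language `(P₂, Q₂)`, the possible successors of `v`.
Pairs are related when both components move and the active boxes of `v` are inherited. The
`(P₁ ∪ P₂)`-variables are read in `M` and the `(Q₂ ∪ Q₃)`-variables in `M'`; on the common ones
both readings agree by the transferred depth-`0` theory. Every `≺'`-step from `z` is matched
thanks to `□ξ`, and a box refuted at `v` is refuted by a maximal counterexample `v'`, which has
strictly more active boxes, so that `◇` of its description fits in the depth budget of `v`.
-/

namespace Formula

def or (φ ψ : Formula) : Formula := φ.neg.imp ψ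

def boxArgs (φ : Formula) : Finset Formula := φ.subfmls.filter fun ρ => ρ.box ∈ φ.subfmls

theorem boxCount_eq_card_boxArgs (φ : Formula) : φ.boxCount = φ.boxArgs.card := rfl

theorem mem_subfmls_self (φ : Formula) : φ ∈ φ.subfmls := by
  cases φ <;> simp [subfmls]

theorem subfmls_subset_of_mem {φ ψ : Formula} (h : ψ ∈ φ.subfmls) : ψ.subfmls ⊆ φ.subfmls := by
  induction φ with
  | var | bot => simp_all [subfmls]
  | imp a b iha ihb =>
    simp only [subfmls, Finset.mem_insert, Finset.mem_union] at h
    rcases h with rfl | h | h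
    · rfl
    · exact (iha h).trans (Finset.subset_union_left.trans (Finset.subset_insert _ _))
    · exact (ihb h).trans (Finset.subset_union_right.trans (Finset.subset_insert _ _))
  | box a ih =>
    simp only [subfmls, Finset.mem_insert] at h
    rcases h with rfl | h
    · rfl
    · exact (ih h).trans (Finset.subset_insert _ _)

theorem mem_boxArgs {φ ρ : Formula} (h : ρ.box ∈ φ.subfmls) : ρ ∈ φ.boxArgs :=
  Finset.mem_filter.2 ⟨subfmls_subset_of_mem h (by simp [subfmls, mem_subfmls_self]), h⟩

@[simp] theorem depth_neg (φ : Formula) : φ.neg.depth = φ.depth := by simp [neg, depth]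

@[simp] theorem depth_and (φ ψ : Formula) : (φ.and ψ).depth = max φ.depth ψ.depth := by
  simp [Formula.and, neg, depth]

@[simp] theorem depth_or (φ ψ : Formula) : (φ.or ψ).depth = max φ.depth ψ.depth := by
  simp [Formula.or, neg, depth]

@[simp] theorem depth_dia (φ : Formula) : φ.dia.depth = φ.depth + 1 := by simp [dia, neg, depth]

end Formula

open Formula

def disjList : List Formula → Formula
  | [] => bot
  | φ :: l => φ.or (disjList l)

theorem depth_conjList_le {l : List Formula} {k : ℕ} (h : ∀ φ ∈ l, φ.depth ≤ k) :
    (conjList l).depth ≤ k := by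
  induction l with
  | nil => simp [conjList, top, neg, depth]
  | cons φ l ih => simp_all [conjList]

theorem depth_disjList_le {l : List Formula} {k : ℕ} (h : ∀ φ ∈ l, φ.depth ≤ k) :
    (disjList l).depth ≤ k := by
  induction l with
  | nil => simp [disjList, depth]
  | cons φ l ih => simp_all [disjList]

section PQFormula

variable {P Q : Finset ℕ} {φ ψ : Formula}

@[simp] theorem pqFormula_var {p : ℕ} : PQFormula P Q (var p) ↔ p ∈ P := by
  simp [PQFormula, vpos, vneg, vsgn]

@[simp] theorem pqFormula_bot : PQFormula P Q bot := by simp [PQFormula, vpos, vneg, vsgn]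

@[simp] theorem pqFormula_imp : PQFormula P Q (φ.imp ψ) ↔ PQFormula Q P φ ∧ PQFormula P Q ψ := by
  simp only [PQFormula, vpos, vneg, vsgn, Bool.not_true, Bool.not_false, Finset.union_subset_iff]
  tauto

@[simp] theorem pqFormula_box : PQFormula P Q φ.box ↔ PQFormula P Q φ := Iff.rfl

@[simp] theorem pqFormula_neg : PQFormula P Q φ.neg ↔ PQFormula Q P φ := by simp [neg]

@[simp] theorem pqFormula_top : PQFormula P Q top := by simp [top]

@[simp] theorem pqFormula_and : PQFormula P Q (φ.and ψ) ↔ PQFormula P Q φ ∧ PQFormula P Q ψ := by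
  simp [Formula.and]

@[simp] theorem pqFormula_or : PQFormula P Q (φ.or ψ) ↔ PQFormula P Q φ ∧ PQFormula P Q ψ := by
  simp [Formula.or]

@[simp] theorem pqFormula_dia : PQFormula P Q φ.dia ↔ PQFormula P Q φ := by simp [dia]

@[simp] theorem pqFormula_conjList {l : List Formula} :
    PQFormula P Q (conjList l) ↔ ∀ φ ∈ l, PQFormula P Q φ := by
  induction l <;> simp_all [conjList]

@[simp] theorem pqFormula_disjList {l : List Formula} :
    PQFormula P Q (disjList l) ↔ ∀ φ ∈ l, PQFormula P Q φ := by
  induction l <;> simp_all [disjList]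

end PQFormula

namespace KripkeModel

variable (M : KripkeModel) {φ ψ : Formula} {w : M.W}

@[simp] theorem sat_bot : ¬M.Sat bot w := id

@[simp] theorem sat_imp : M.Sat (φ.imp ψ) w ↔ (M.Sat φ w → M.Sat ψ w) := Iff.rfl

@[simp] theorem sat_box : M.Sat φ.box w ↔ ∀ x, M.rel w x → M.Sat φ x := Iff.rfl

@[simp] theorem sat_neg : M.Sat φ.neg w ↔ ¬M.Sat φ w := Iff.rfl

@[simp] theorem sat_top : M.Sat top w := id

@[simp] theorem sat_and : M.Sat (φ.and ψ) w ↔ M.Sat φ w ∧ M.Sat ψ w := by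
  simp [Formula.and]

@[simp] theorem sat_or : M.Sat (φ.or ψ) w ↔ M.Sat φ w ∨ M.Sat ψ w := by
  simp [Formula.or, or_iff_not_imp_left]

@[simp] theorem sat_iff : M.Sat (φ.iff ψ) w ↔ (M.Sat φ w ↔ M.Sat ψ w) := by
  simp [Formula.iff, iff_def]

@[simp] theorem sat_dia : M.Sat φ.dia w ↔ ∃ x, M.rel w x ∧ M.Sat φ x := by
  simp [dia]

@[simp] theorem sat_conjList {l : List Formula} : M.Sat (conjList l) w ↔ ∀ φ ∈ l, M.Sat φ w := by
  induction l <;> simp_all [conjList]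

@[simp] theorem sat_disjList {l : List Formula} : M.Sat (disjList l) w ↔ ∃ φ ∈ l, M.Sat φ w := by
  induction l <;> simp_all [disjList]

def withSubst (σ : ℕ → Formula) : KripkeModel := ⟨M.W, M.nonempty, M.rel, fun x p => M.Sat (σ p) x⟩

theorem sat_subst (σ : ℕ → Formula) (φ : Formula) (w : M.W) :
    M.Sat (φ.subst σ) w ↔ (M.withSubst σ).Sat φ w := by
  induction φ generalizing w with
  | var | bot => rfl
  | imp φ ψ ihφ ihψ => simp only [subst, sat_imp, ihφ, ihψ]; rfl
  | box φ ih => simp only [subst, sat_box, ih]; rfl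

theorem isNormal_valid : IsNormal {χ | ∀ (N : KripkeModel) (x : N.W), N.Sat χ x} where
  taut χ hχ N x := by
    classical
    simpa using hχ (fun ρ => decide (N.Sat ρ x)) (by simp)
      (fun ρ θ => by by_cases N.Sat ρ x <;> simp [*])
  axK N x hpq hp y hy := hpq y hy (hp y hy)
  mp _ _ hφψ hφ N x := hφψ N x (hφ N x)
  nec _ hφ N _ y _ := hφ N y
  subst_mem _ hφ σ N x := (N.sat_subst σ _ x).2 (hφ (N.withSubst σ) x)

theorem sat_of_mem_theoryK (h : φ ∈ TheoryK) (w : M.W) : M.Sat φ w :=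
  Set.mem_sInter.1 h _ ⟨isNormal_valid, Set.empty_subset _⟩ M w

end KripkeModel

section Theories

variable {F : ℕ → Finset ℕ → Finset ℕ → List Formula} {M M' : KripkeModel} {k : ℕ}
  {P Q : Finset ℕ} {u : M.W} {z : M'.W}

theorem sat_of_th_subset (hF : IsFamily F) (h : Th F M k P Q u ⊆ Th F M' k P Q z) {χ : Formula}
    (hχ : PQFormula P Q χ) (hd : χ.depth ≤ k) (hu : M.Sat χ u) : M'.Sat χ z := by
  obtain ⟨ρ, hρ, hρχ⟩ := (hF k P Q).2 χ hχ hd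
  have hequiv (N : KripkeModel) (x : N.W) : N.Sat ρ x ↔ N.Sat χ x :=
    (N.sat_iff).1 (N.sat_of_mem_theoryK hρχ x)
  exact (hequiv M' z).1 (h ⟨hρ, (hequiv M u).2 hu⟩).2

theorem sat_cfml_self : M.Sat (Cfml F M k P Q u) u := by
  simp [Cfml]

theorem th_subset_of_sat_cfml (hz : M'.Sat (Cfml F M k P Q u) z) :
    Th F M k P Q u ⊆ Th F M' k P Q z := by
  rintro ρ ⟨hρ, hρu⟩
  simp only [Cfml, KripkeModel.sat_conjList, List.mem_filter, decide_eq_true_eq, and_imp] at hz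
  exact ⟨hρ, hz ρ hρ hρu⟩

theorem pqFormula_cfml (hF : IsFamily F) : PQFormula P Q (Cfml F M k P Q u) := by
  simp only [Cfml, pqFormula_conjList, List.mem_filter]
  exact fun ρ hρ => ((hF k P Q).1 ρ hρ.1).1

theorem depth_cfml_le (hF : IsFamily F) : (Cfml F M k P Q u).depth ≤ k :=
  depth_conjList_le fun ρ hρ => ((hF k P Q).1 ρ (List.mem_filter.1 hρ).1).2

end Theories

/-- A `≺`-maximal counterexample to `σ` satisfies `□σ`. -/
theorem KripkeModel.exists_rel_not_sat_sat_box {M : KripkeModel} [Finite M.W]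
    [IsTrans M.W M.rel] [Std.Irrefl M.rel] {σ : Formula} {u : M.W}
    (h : ¬M.Sat σ.box u) : ∃ v, M.rel u v ∧ ¬M.Sat σ v ∧ M.Sat σ.box v := by
  simp only [sat_box, not_forall] at h
  obtain ⟨y, hy, hσy⟩ := h
  have : IsTrans M.W (flip M.rel) := ⟨fun a b c h₁ h₂ => IsTrans.trans c b a h₂ h₁⟩
  have : Std.Irrefl (flip M.rel) := ⟨irrefl (r := M.rel)⟩
  obtain ⟨v, ⟨huv, hσv⟩, hmax⟩ := (Finite.wellFounded_of_trans_of_irrefl (flip M.rel)).has_min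
    {y | M.rel u y ∧ ¬M.Sat σ y} ⟨y, hy, hσy⟩
  refine ⟨v, huv, hσv, fun x hvx => ?_⟩
  by_contra hσx
  exact hmax x ⟨_root_.trans huv hvx, hσx⟩ hvx

namespace GLAmalgam

open KripkeModel

variable (F : ℕ → Finset ℕ → Finset ℕ → List Formula) (M : KripkeModel) (P Q : Finset ℕ)
  (B : Finset Formula)

open Classical in
noncomputable def activeBoxes (u : M.W) : Finset Formula := B.filter fun σ => M.Sat σ.box u

/-- `v` can serve as a successor of any world whose active boxes are `S`. -/
def Realizes (S : Finset Formula) (v : M.W) : Prop := S ⊆ activeBoxes M B v ∧ ∀ σ ∈ S, M.Sat σ v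

def depthBound (S : Finset Formula) : ℕ := 3 * (B.card - S.card) + 2

variable {F M P Q B} {S : Finset Formula} {u v x : M.W}

theorem mem_activeBoxes {σ : Formula} : σ ∈ activeBoxes M B u ↔ σ ∈ B ∧ M.Sat σ.box u := by
  classical
  simp [activeBoxes]

theorem card_activeBoxes_le : (activeBoxes M B u).card ≤ B.card := by
  classical
  exact Finset.card_le_card (Finset.filter_subset _ _)

theorem realizes_activeBoxes_of_rel [IsTrans M.W M.rel] (h : M.rel u v) :
    Realizes M B (activeBoxes M B u) v := by
  simp only [Realizes, Finset.subset_iff, mem_activeBoxes, sat_box]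
  exact ⟨fun σ ⟨hσ, hu⟩ => ⟨hσ, fun x hx => hu x (_root_.trans h hx)⟩, fun σ ⟨_, hu⟩ => hu v h⟩

theorem Realizes.trans (h₁ : Realizes M B (activeBoxes M B u) v)
    (h₂ : Realizes M B (activeBoxes M B v) x) : Realizes M B (activeBoxes M B u) x :=
  ⟨h₁.1.trans h₂.1, fun σ hσ => h₂.2 σ (h₁.1 hσ)⟩

theorem card_sub_card_lt (h : Realizes M B S v) (hne : activeBoxes M B v ≠ S) :
    B.card - (activeBoxes M B v).card < B.card - S.card := by
  have := Finset.card_lt_card (h.1.ssubset_of_ne hne.symm)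
  have := card_activeBoxes_le (M := M) (B := B) (u := v)
  omega

variable (F M P Q B)

open Classical in
/-- A `(P, Q)`-description of the worlds realizing `S`. -/
noncomputable def xi [Fintype M.W] (S : Finset Formula) : Formula :=
  disjList ((Finset.univ : Finset M.W).toList.filterMap fun v =>
    if h : Realizes M B S v then
      some ((Cfml F M (depthBound B (activeBoxes M B v)) P Q v).and
        (if h' : activeBoxes M B v = S then top else
          have := card_sub_card_lt h h'
          (xi (activeBoxes M B v)).box))
    else none)
termination_by B.card - S.card

variable {F M P Q B} [Fintype M.W]

theorem sat_xi_iff {N : KripkeModel} {z : N.W} :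
    N.Sat (xi F M P Q B S) z ↔ ∃ v, Realizes M B S v ∧
      N.Sat (Cfml F M (depthBound B (activeBoxes M B v)) P Q v) z ∧
      (activeBoxes M B v = S ∨ N.Sat (xi F M P Q B (activeBoxes M B v)).box z) := by
  rw [xi]
  simp only [sat_disjList, List.mem_filterMap, Finset.mem_toList, Finset.mem_univ, true_and,
    dite_eq_ite, Option.ite_none_right_eq_some, Option.some.injEq]
  constructor
  · rintro ⟨_, ⟨v, hv, rfl⟩, hz⟩
    refine ⟨v, hv, (sat_and N).1 hz |>.1, ?_⟩
    split_ifs at hz with h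
    · exact .inl h
    · exact .inr ((sat_and N).1 hz).2
  · rintro ⟨v, hv, hC, hξ⟩
    refine ⟨_, ⟨v, hv, rfl⟩, (sat_and N).2 ⟨hC, ?_⟩⟩
    split_ifs with h
    · exact sat_top N
    · exact hξ.resolve_left h

theorem sat_xi_of_realizes [IsTrans M.W M.rel] {S : Finset Formula} {v : M.W}
    (h : Realizes M B S v) : M.Sat (xi F M P Q B S) v :=
  sat_xi_iff.2 ⟨v, h, sat_cfml_self, or_iff_not_imp_left.2 fun hne y hy =>
    have := card_sub_card_lt h hne
    sat_xi_of_realizes (realizes_activeBoxes_of_rel hy)⟩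
termination_by B.card - S.card

theorem pqFormula_xi (hF : IsFamily F) {S : Finset Formula} : PQFormula P Q (xi F M P Q B S) := by
  rw [xi]
  simp only [pqFormula_disjList, List.mem_filterMap, Finset.mem_toList, Finset.mem_univ, true_and,
    dite_eq_ite, Option.ite_none_right_eq_some, Option.some.injEq, forall_exists_index, and_imp]
  rintro _ v hv rfl
  refine pqFormula_and.2 ⟨pqFormula_cfml hF, ?_⟩
  split_ifs with h
  · exact pqFormula_top
  · have := card_sub_card_lt hv h
    exact pqFormula_box.2 (pqFormula_xi hF)
termination_by B.card - S.card

theorem depth_xi_le (hF : IsFamily F) {S : Finset Formula} :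
    (xi F M P Q B S).depth ≤ depthBound B S := by
  rw [xi]
  refine depth_disjList_le ?_
  simp only [List.mem_filterMap, Finset.mem_toList, Finset.mem_univ, true_and,
    dite_eq_ite, Option.ite_none_right_eq_some, Option.some.injEq, forall_exists_index, and_imp]
  rintro _ v hv rfl
  have hS := Finset.card_le_card hv.1
  have hB : (activeBoxes M B v).card ≤ B.card := card_activeBoxes_le
  refine (depth_and _ _).trans_le (max_le ((depth_cfml_le hF).trans ?_) ?_)
  · simp only [depthBound]; omega
  split_ifs with h
  · simp [top, neg, depth]
  · have := card_sub_card_lt hv h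
    have hξ : (xi F M P Q B (activeBoxes M B v)).depth ≤ _ := depth_xi_le hF
    simp only [depth, depthBound] at hξ ⊢
    omega
termination_by B.card - S.card

variable (F P Q B) in
/-- The formula a world `z` of another model must satisfy to be paired with `v`. -/
noncomputable def charFormula (v : M.W) : Formula :=
  (Cfml F M (depthBound B (activeBoxes M B v)) P Q v).and (xi F M P Q B (activeBoxes M B v)).box

theorem sat_charFormula_self [IsTrans M.W M.rel] : M.Sat (charFormula F P Q B v) v :=
  (sat_and M).2 ⟨sat_cfml_self, fun _ h => sat_xi_of_realizes (realizes_activeBoxes_of_rel h)⟩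

theorem pqFormula_charFormula (hF : IsFamily F) : PQFormula P Q (charFormula F P Q B v) :=
  pqFormula_and.2 ⟨pqFormula_cfml hF, pqFormula_box.2 (pqFormula_xi hF)⟩

theorem depth_charFormula_le (hF : IsFamily F) :
    (charFormula F P Q B v).depth ≤ depthBound B (activeBoxes M B v) + 1 := by
  have hξ : (xi F M P Q B (activeBoxes M B v)).depth ≤ _ := depth_xi_le hF
  have hC : (Cfml F M (depthBound B (activeBoxes M B v)) P Q v).depth ≤ _ := depth_cfml_le hF
  simp only [charFormula, depth_and, depth]
  omega

variable {M' : KripkeModel} {z z' : M'.W}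

theorem sat_of_sat_charFormula (hF : IsFamily F) (hz : M'.Sat (charFormula F P Q B v) z)
    {χ : Formula} (hχ : PQFormula P Q χ) (hd : χ.depth ≤ depthBound B (activeBoxes M B v))
    (hv : M.Sat χ v) : M'.Sat χ z :=
  sat_of_th_subset hF (th_subset_of_sat_cfml ((sat_and M').1 hz).1) hχ hd hv

theorem exists_realizes_sat_charFormula_of_rel [IsTrans M'.W M'.rel]
    (hz : M'.Sat (charFormula F P Q B u) z) (h : M'.rel z z') :
    ∃ v, Realizes M B (activeBoxes M B u) v ∧ M'.Sat (charFormula F P Q B v) z' := by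
  obtain ⟨v, hv, hC, hξ⟩ := sat_xi_iff.1 (((sat_and M').1 hz).2 z' h)
  refine ⟨v, hv, (sat_and M').2 ⟨hC, ?_⟩⟩
  rcases hξ with heq | hξ
  · rw [heq]
    exact fun y hy => ((sat_and M').1 hz).2 y (_root_.trans h hy)
  · exact hξ

/-- Since the maximal counterexample `v` activates `σ` and `u` does not, the depth bound drops by
at least `3`, enough to transfer `◇ charFormula v` from `u` to `z`. -/
theorem exists_realizes_not_sat_sat_charFormula (hF : IsFamily F) [IsTrans M.W M.rel]
    [Std.Irrefl M.rel] (hz : M'.Sat (charFormula F P Q B u) z) {σ : Formula} (hσ : σ ∈ B)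
    (h : ¬M.Sat σ.box u) : ∃ v z', M'.rel z z' ∧ Realizes M B (activeBoxes M B u) v ∧
      ¬M.Sat σ v ∧ M'.Sat (charFormula F P Q B v) z' := by
  obtain ⟨v, huv, hσv, hσbox⟩ := exists_rel_not_sat_sat_box h
  have hreal := realizes_activeBoxes_of_rel (B := B) huv
  have hlt : (activeBoxes M B u).card < (activeBoxes M B v).card :=
    Finset.card_lt_card ((Finset.ssubset_iff_of_subset hreal.1).2
      ⟨σ, mem_activeBoxes.2 ⟨hσ, hσbox⟩, fun hu => h (mem_activeBoxes.1 hu).2⟩)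
  have hd : (charFormula F P Q B v).dia.depth ≤ depthBound B (activeBoxes M B u) := by
    have hv : (charFormula F P Q B v).depth ≤ _ := depth_charFormula_le hF
    have hB : (activeBoxes M B v).card ≤ B.card := card_activeBoxes_le
    simp only [depth_dia, depthBound] at hv ⊢
    omega
  have hdia := sat_of_sat_charFormula hF hz (pqFormula_dia.2 (pqFormula_charFormula hF)) hd
    ((sat_dia M).2 ⟨v, huv, sat_charFormula_self⟩)
  obtain ⟨z', hzz', hz'⟩ := (sat_dia M').1 hdia
  exact ⟨v, z', hzz', hreal, hσv, hz'⟩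

variable (F P Q B) in
def amalgam (M' : KripkeModel) (A C : Finset ℕ)
    (hne : Nonempty {p : M'.W × M.W // M'.Sat (charFormula F P Q B p.2) p.1}) : KripkeModel where
  W := {p : M'.W × M.W // M'.Sat (charFormula F P Q B p.2) p.1}
  nonempty := hne
  rel a b := M'.rel a.1.1 b.1.1 ∧ Realizes M B (activeBoxes M B a.1.2) b.1.2
  val a q := (q ∈ A ∧ M.val a.1.2 q) ∨ (q ∈ C ∧ M'.val a.1.1 q)

variable {A C : Finset ℕ} {hne : Nonempty {p : M'.W × M.W // M'.Sat (charFormula F P Q B p.2) p.1}}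

instance [IsTrans M'.W M'.rel] :
    IsTrans (amalgam F P Q B M' A C hne).W (amalgam F P Q B M' A C hne).rel :=
  ⟨fun _ _ _ h₁ h₂ => ⟨_root_.trans h₁.1 h₂.1, h₁.2.trans h₂.2⟩⟩

instance [Std.Irrefl M'.rel] : Std.Irrefl (amalgam F P Q B M' A C hne).rel :=
  ⟨fun a h => irrefl a.1.1 h.1⟩

instance [Finite M'.W] : Finite (amalgam F P Q B M' A C hne).W :=
  Subtype.finite

theorem transfer_snd (hF : IsFamily F) [IsTrans M.W M.rel] [Std.Irrefl M.rel] {N : Finset ℕ}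
    (hN : N ∩ C ⊆ Q) {ψ : Formula} (hψ : ∀ ρ, ρ.box ∈ ψ.subfmls → ρ ∈ B)
    (a : (amalgam F P Q B M' A C hne).W) :
    (PQFormula A N ψ → M.Sat ψ a.1.2 → (amalgam F P Q B M' A C hne).Sat ψ a) ∧
      (PQFormula N A ψ → (amalgam F P Q B M' A C hne).Sat ψ a → M.Sat ψ a.1.2) := by
  induction ψ generalizing a with
  | var p =>
    refine ⟨fun hp hu => .inl ⟨pqFormula_var.1 hp, hu⟩, fun hp ha => ?_⟩
    rcases ha with ⟨-, hu⟩ | ⟨hpC, hz⟩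
    · exact hu
    · by_contra hu
      have hpQ : p ∈ Q := hN (Finset.mem_inter.2 ⟨pqFormula_var.1 hp, hpC⟩)
      exact sat_of_sat_charFormula hF a.2 (χ := (var p).neg) (by simpa using hpQ) (by simp [depth])
        hu hz
  | bot => simp
  | imp ψ₁ ψ₂ ih₁ ih₂ =>
    have h₁ := ih₁ (fun ρ hρ => hψ ρ (by simp [subfmls, hρ])) a
    have h₂ := ih₂ (fun ρ hρ => hψ ρ (by simp [subfmls, hρ])) a
    simp only [pqFormula_imp, sat_imp]
    exact ⟨fun hpq h hs => h₂.1 hpq.2 (h (h₁.2 hpq.1 hs)),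
      fun hpq h hs => h₂.2 hpq.2 (h (h₁.1 hpq.1 hs))⟩
  | box ρ ih =>
    have ih := ih (fun σ hσ => hψ σ (by simp [subfmls, hσ]))
    have hρB : ρ ∈ B := hψ ρ (by simp [subfmls])
    simp only [pqFormula_box, sat_box]
    refine ⟨fun hpq hu b hab => (ih b).1 hpq ((hab.2.2 ρ (mem_activeBoxes.2 ⟨hρB, hu⟩))), ?_⟩
    intro hpq ha
    by_contra hu
    obtain ⟨v, z', hzz', hreal, hρv, hz'⟩ :=
      exists_realizes_not_sat_sat_charFormula hF a.2 hρB (by simpa using hu)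
    exact hρv ((ih ⟨(z', v), hz'⟩).2 hpq (ha _ ⟨hzz', hreal⟩))

theorem transfer_fst (hF : IsFamily F) [IsTrans M'.W M'.rel] {N : Finset ℕ} (hN : A ∩ N ⊆ P)
    (θ : Formula) (a : (amalgam F P Q B M' A C hne).W) :
    (PQFormula N C θ → (amalgam F P Q B M' A C hne).Sat θ a → M'.Sat θ a.1.1) ∧
      (PQFormula C N θ → M'.Sat θ a.1.1 → (amalgam F P Q B M' A C hne).Sat θ a) := by
  induction θ generalizing a with
  | var p =>
    refine ⟨fun hp ha => ?_, fun hp hz => .inr ⟨pqFormula_var.1 hp, hz⟩⟩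
    rcases ha with ⟨hpA, hu⟩ | ⟨-, hz⟩
    · have hpP : p ∈ P := hN (Finset.mem_inter.2 ⟨hpA, pqFormula_var.1 hp⟩)
      exact sat_of_sat_charFormula hF a.2 (pqFormula_var.2 hpP) (Nat.zero_le _) hu
    · exact hz
  | bot => simp
  | imp θ₁ θ₂ ih₁ ih₂ =>
    simp only [pqFormula_imp, sat_imp]
    exact ⟨fun hpq h hs => (ih₂ a).1 hpq.2 (h ((ih₁ a).2 hpq.1 hs)),
      fun hpq h hs => (ih₂ a).2 hpq.2 (h ((ih₁ a).1 hpq.1 hs))⟩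
  | box θ ih =>
    simp only [pqFormula_box, sat_box]
    refine ⟨fun hpq ha z' hzz' => ?_, fun hpq hz b hab => (ih b).2 hpq (hz _ hab.1)⟩
    obtain ⟨v, hreal, hz'⟩ := exists_realizes_sat_charFormula_of_rel a.2 hzz'
    exact (ih ⟨(z', v), hz'⟩).1 hpq (ha _ ⟨hzz', hreal⟩)

end GLAmalgam

theorem Finset.union_inter_union_of_disjoint {α : Type*} [DecidableEq α] {s t u : Finset α}
    (h : Disjoint s u) : (s ∪ t) ∩ (t ∪ u) = t := by
  rw [Finset.union_comm s t, ← Finset.union_inter_distrib_left,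
    Finset.disjoint_iff_inter_eq_empty.1 h, Finset.union_empty]

open GLAmalgam in
theorem gl_main_lemma_general (F : ℕ → Finset ℕ → Finset ℕ → List Formula) (hF : IsFamily F)
    (P1 P2 P3 Q1 Q2 Q3 : Finset ℕ) (hP13 : Disjoint P1 P3) (hQ13 : Disjoint Q1 Q3)
    (φ : Formula) (M M' : KripkeModel)
    (hMfin : Finite M.W) (hMtr : Transitive M.rel) (hMir : Irreflexive M.rel)
    (hM'fin : Finite M'.W) (hM'tr : Transitive M'.rel) (hM'ir : Irreflexive M'.rel)
    (w : M.W) (w' : M'.W) (m : ℕ)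
    (h : Th F M (3 * φ.boxCount + 3) P2 Q2 w ⊆ Th F M' (3 * φ.boxCount + 3) P2 Q2 w') :
    ∃ Mst : KripkeModel, Finite Mst.W ∧ Transitive Mst.rel ∧ Irreflexive Mst.rel ∧
      ∃ wst : Mst.W,
        (∀ ψ ∈ φ.subfmls,
          (PQFormula (P1 ∪ P2) (Q1 ∪ Q2) ψ → M.Sat ψ w → Mst.Sat ψ wst) ∧
          (PQFormula (Q1 ∪ Q2) (P1 ∪ P2) ψ → ¬M.Sat ψ w → ¬Mst.Sat ψ wst)) ∧
        Th F Mst m (P2 ∪ P3) (Q2 ∪ Q3) wst ⊆ Th F M' m (P2 ∪ P3) (Q2 ∪ Q3) w' := by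
  have : Fintype M.W := Fintype.ofFinite _
  have : IsTrans M.W M.rel := ⟨hMtr⟩
  have : Std.Irrefl M.rel := ⟨hMir⟩
  have : IsTrans M'.W M'.rel := ⟨hM'tr⟩
  have : Std.Irrefl M'.rel := ⟨hM'ir⟩
  have hroot : M'.Sat (charFormula F P2 Q2 φ.boxArgs w) w' := by
    refine sat_of_th_subset hF h (pqFormula_charFormula hF) ?_ sat_charFormula_self
    have hd : (charFormula F P2 Q2 φ.boxArgs w).depth ≤ _ := depth_charFormula_le hF
    rw [boxCount_eq_card_boxArgs]
    simp only [depthBound] at hd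
    omega
  let Mst := amalgam F P2 Q2 φ.boxArgs M' (P1 ∪ P2) (Q2 ∪ Q3) ⟨⟨(w', w), hroot⟩⟩
  let wst : Mst.W := ⟨(w', w), hroot⟩
  refine ⟨Mst, inferInstance, IsTrans.trans, Std.Irrefl.irrefl, wst, fun ψ hψ => ?_, ?_⟩
  · have := transfer_snd hF (Finset.union_inter_union_of_disjoint hQ13).subset
      (fun ρ hρ => mem_boxArgs (subfmls_subset_of_mem hψ hρ)) wst
    exact ⟨this.1, fun hpq hu ha => hu (this.2 hpq ha)⟩
  · rintro θ ⟨hθ, ha⟩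
    exact ⟨hθ, (transfer_fst hF (Finset.union_inter_union_of_disjoint hP13).subset θ wst).1
      ((hF m _ _).1 θ hθ).1 ha⟩

/-- Main lemma for GL: model extension property for the class of finite transitive
irreflexive Kripke models. -/
theorem gl_main_lemma (F : ℕ → Finset ℕ → Finset ℕ → List Formula) (hF : IsFamily F)
    (P1 P2 P3 Q1 Q2 Q3 : Finset ℕ)
    (hP12 : Disjoint P1 P2) (hP13 : Disjoint P1 P3) (hP23 : Disjoint P2 P3)
    (hQ12 : Disjoint Q1 Q2) (hQ13 : Disjoint Q1 Q3) (hQ23 : Disjoint Q2 Q3)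
    (φ : Formula) (hφ : PQFormula (P1 ∪ P2) (Q1 ∪ Q2) φ)
    (M M' : KripkeModel)
    (hMfin : Finite M.W) (hMtr : Transitive M.rel) (hMir : Irreflexive M.rel)
    (hM'fin : Finite M'.W) (hM'tr : Transitive M'.rel) (hM'ir : Irreflexive M'.rel)
    (w : M.W) (w' : M'.W) (m : ℕ)
    (h : Th F M (3 * φ.boxCount + 3) P2 Q2 w ⊆ Th F M' (3 * φ.boxCount + 3) P2 Q2 w') :
    ∃ Mst : KripkeModel, Finite Mst.W ∧ Transitive Mst.rel ∧ Irreflexive Mst.rel ∧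
      ∃ wst : Mst.W,
        (∀ ψ ∈ φ.subfmls,
          (PQFormula (P1 ∪ P2) (Q1 ∪ Q2) ψ → M.Sat ψ w → Mst.Sat ψ wst) ∧
          (PQFormula (Q1 ∪ Q2) (P1 ∪ P2) ψ → ¬M.Sat ψ w → ¬Mst.Sat ψ wst)) ∧
        Th F Mst m (P2 ∪ P3) (Q2 ∪ Q3) wst ⊆ Th F M' m (P2 ∪ P3) (Q2 ∪ Q3) w' :=
  gl_main_lemma_general F hF P1 P2 P3 Q1 Q2 Q3 hP13 hQ13 φ M M' hMfin hMtr hMir hM'fin hM'tr hM'ir w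
    w' m h
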